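/- Let Q be the quiver of type A_{2n} with the zigzag orientation of the paper (arrows x_i: i → n+i and y_i: i → n+i+1 for appropriate indices). Then for any abelian group element assignment, the automorphism of the repetition quiver ZQ given by reflecting each slice upside-down (sending vertex i to 2n+1−i appropriately) is a square root of the inverse Auslander–Reiten translation τ^{-1}, i.e., its square equals τ^{-1} as automorphisms of ZQ. -/
import Mathlib


/-!
# Statement 6

For the quiver `Q` of type `A_{2n}` with the zigzag orientation (vertices `0,…,2n-1`,
source vertices `0,…,n-1`, sink vertices `n,…,2n-1`, arrows `x_i : i → n+i` and
`y_i : i → n+i+1`), the "upside-down reflection" of the repetition quiver `ℤQ` is a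
square root of the inverse Auslander–Reiten translation `τ⁻¹`: it is a quiver
automorphism of `ℤQ` whose square equals `τ⁻¹`.

`ℤQ` has vertex set `ℤ × Q₀`, arrows `(p,i) → (p,j)` and `(p,j) → (p+1,i)` for each
arrow `i → j` of `Q`, and translation `τ(p,i) = (p-1,i)`, so that `τ⁻¹(p,i) = (p+1,i)`.
-/

/-- The arrow relation of the type `A_{2n}` quiver with the zigzag orientation
(`0`-indexed): arrows `i → n+i` (the `x_i`) and `i → n+i+1` (the `y_i`), for `i < n`. -/
def zigzagArrow (n : ℕ) (u v : Fin (2 * n)) : Prop :=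
  (u : ℕ) < n ∧ ((v : ℕ) = (u : ℕ) + n ∨ (v : ℕ) = (u : ℕ) + n + 1)

/-- The adjacency relation of the repetition quiver `ℤQ` of a quiver with vertex set `V`
and arrow relation `arr` : arrows `(p,u) → (p,v)` and `(p,v) → (p+1,u)` for every arrow
`u → v` of `Q`. -/
def repAdj {V : Type*} (arr : V → V → Prop) : (ℤ × V) → (ℤ × V) → Prop :=
  fun z w => (w.1 = z.1 ∧ arr z.2 w.2) ∨ (w.1 = z.1 + 1 ∧ arr w.2 z.2)

/-- The upside-down reflection of `ℤ(A_{2n})`: a source vertex `(p, v)` (`v < n`)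
is sent to `(p, 2n-1-v)`, a sink vertex `(p, v)` (`n ≤ v`) is sent to `(p+1, 2n-1-v)`. -/
def zigzagReflection (n : ℕ) (hn : 0 < n) : ℤ × Fin (2 * n) → ℤ × Fin (2 * n) :=
  fun z =>
    if (z.2 : ℕ) < n then
      (z.1, ⟨2 * n - 1 - (z.2 : ℕ), by omega⟩)
    else
      (z.1 + 1, ⟨2 * n - 1 - (z.2 : ℕ), by omega⟩)


private lemma zz_sq (n : ℕ) (hn : 0 < n) (z : ℤ × Fin (2 * n)) :
    zigzagReflection n hn (zigzagReflection n hn z) = (z.1 + 1, z.2) := by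
  obtain ⟨p, v⟩ := z
  simp only [zigzagReflection]
  by_cases h : (v : ℕ) < n
  · simp only [h, if_true]
    have h2 : ¬ (2 * n - 1 - (v : ℕ) < n) := by omega
    simp only [h2, if_false]
    refine Prod.ext rfl (Fin.ext ?_)
    simp only
    omega
  · simp only [h, if_false]
    have h2 : (2 * n - 1 - (v : ℕ) < n) := by omega
    simp only [h2, if_true]
    refine Prod.ext rfl (Fin.ext ?_)
    simp only
    omega

private lemma zz_fwd (n : ℕ) (hn : 0 < n) (z w : ℤ × Fin (2 * n))
    (h : repAdj (zigzagArrow n) z w) :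
    repAdj (zigzagArrow n) (zigzagReflection n hn z) (zigzagReflection n hn w) := by
  obtain ⟨p, u⟩ := z
  obtain ⟨q, v⟩ := w
  simp only [repAdj, zigzagArrow, zigzagReflection] at h ⊢
  rcases h with ⟨hq, hu, hv⟩ | ⟨hq, hv, hu⟩
  · have h1 : (u : ℕ) < n := hu
    have h2 : ¬ ((v : ℕ) < n) := by omega
    simp only [h1, if_true, h2, if_false]
    right
    refine ⟨by omega, by omega, by omega⟩
  · have h1 : ¬ ((u : ℕ) < n) := by omega
    have h2 : (v : ℕ) < n := hv
    simp only [h1, if_false, h2, if_true]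
    left
    refine ⟨by omega, by omega, by omega⟩

private lemma zz_shift {V : Type*} (arr : V → V → Prop) (z w : ℤ × V) :
    repAdj arr (z.1 + 1, z.2) (w.1 + 1, w.2) ↔ repAdj arr z w := by
  simp only [repAdj]
  constructor <;> rintro (⟨h1, h2⟩ | ⟨h1, h2⟩)
  · exact Or.inl ⟨by omega, h2⟩
  · exact Or.inr ⟨by omega, h2⟩
  · exact Or.inl ⟨by omega, h2⟩
  · exact Or.inr ⟨by omega, h2⟩

/-- The upside-down reflection of the repetition quiver of the
zigzag-oriented `A_{2n}` quiver is an automorphism of the repetition quiver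
(a bijection preserving the arrows) whose square is the inverse AR translation
`τ⁻¹ : (p, v) ↦ (p+1, v)`. -/
theorem zigzagReflection_is_square_root_of_inverse_AR_translation (n : ℕ) (hn : 0 < n) :
    Function.Bijective (zigzagReflection n hn) ∧
    (∀ z w : ℤ × Fin (2 * n),
      repAdj (zigzagArrow n) z w ↔ repAdj (zigzagArrow n) (zigzagReflection n hn z) (zigzagReflection n hn w)) ∧
    (∀ z : ℤ × Fin (2 * n), zigzagReflection n hn (zigzagReflection n hn z) = (z.1 + 1, z.2)) := by

  have hsq := zz_sq n hn
  refine ⟨?_, ?_, hsq⟩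
  · constructor
    · intro a b hab
      have := congrArg (zigzagReflection n hn) hab
      rw [hsq, hsq] at this
      obtain ⟨p, v⟩ := a; obtain ⟨q, w⟩ := b
      simpa [Prod.ext_iff] using this
    · intro z
      refine ⟨zigzagReflection n hn (z.1 - 1, z.2), ?_⟩
      rw [hsq]
      simp
  · intro z w
    constructor
    · exact zz_fwd n hn z w
    · intro h
      have := zz_fwd n hn _ _ h
      rw [hsq, hsq] at this
      exact (zz_shift _ z w).mp this
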